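/- Let d ≥ 1 and let D ⊂ ℝ^d be a nonempty bounded open set. Let a, b > 0 and ϱ > −d satisfy a + ϱ + b < 0. Then there exists a constant C = C(d, a, b, ϱ), independent of D, such that for all x, y ∈ D with x ≠ y: ∫_D ∫_D |y−z|^{a−d} |z−w|^{ϱ} |w−x|^{b−d} dz dw ≤ C |x−y|^{a+ϱ+b}. -/

import Mathlib

/-!
Both integrations are instances of the Riesz composition bound: for `-d < α, β` with
`α + β + d < 0`, `∫ |u - z|^α |z - v|^β dz ≤ C |u - v|^(α + β + d)`. With `ρ = |u - v| / 2`
we have `|z - u| + |z - v| ≥ 2ρ`, so the integrand is at most the sum of two radial kernels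
centred at `u` and at `v`, each equal to `ρ^β |x|^α` on the ball of radius `ρ` and to
`|x|^(α + β)` outside it. Such a kernel is homogeneous of degree `α + β` in `(ρ, x)`, so its
integral is `ρ^(α + β + d)` times that of the kernel with `ρ = 1`, which is finite because
`|x|^α` is integrable near `0` and `|x|^(α + β)` near infinity. Enlarging `D` to the whole
space and composing twice yields the exponent `(a - d) + ϱ + (b - d) + 2d = a + ϱ + b`.
-/

open MeasureTheory Metric Module

open scoped ENNReal

noncomputable def splitKernel (α β ρ s : ℝ) : ℝ := if s < ρ then ρ ^ β * s ^ α else s ^ (α + β)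

section

variable {α β γ ρ s t : ℝ}

theorem splitKernel_nonneg (hρ : 0 ≤ ρ) (hs : 0 ≤ s) : 0 ≤ splitKernel α β ρ s := by
  unfold splitKernel; split_ifs <;> positivity

@[fun_prop]
theorem measurable_splitKernel : Measurable (splitKernel α β ρ) :=
  Measurable.ite measurableSet_Iio (by fun_prop) (by fun_prop)

theorem splitKernel_mul_left (hρ : 0 < ρ) (hs : 0 ≤ s) :
    splitKernel α β ρ (ρ * s) = ρ ^ (α + β) * splitKernel α β 1 s := by
  simp only [splitKernel, mul_lt_iff_lt_one_right hρ, Real.one_rpow, one_mul]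
  split_ifs
  · rw [Real.mul_rpow hρ.le hs, Real.rpow_add hρ]; ring
  · rw [Real.mul_rpow hρ.le hs]

theorem rpow_mul_rpow_le_splitKernel (hρ : 0 < ρ) (hs : 0 ≤ s) (hst : s ≤ t) (hρt : ρ ≤ t)
    (hβ : β ≤ 0) : s ^ α * t ^ β ≤ splitKernel α β ρ s := by
  unfold splitKernel
  split_ifs with hsρ
  · rw [mul_comm]
    exact mul_le_mul_of_nonneg_right (Real.rpow_le_rpow_of_nonpos hρ hρt hβ) (by positivity)
  · have hs₀ : 0 < s := hρ.trans_le (not_lt.1 hsρ)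
    rw [Real.rpow_add hs₀]
    exact mul_le_mul_of_nonneg_left (Real.rpow_le_rpow_of_nonpos hs₀ hst hβ) (by positivity)

/-- Since `s + t ≥ 2ρ`, the larger of `s` and `t` is at least `ρ`. -/
theorem rpow_mul_rpow_le_splitKernel_add (hρ : 0 < ρ) (hs : 0 ≤ s) (ht : 0 ≤ t)
    (hst : 2 * ρ ≤ s + t) (hα : α ≤ 0) (hβ : β ≤ 0) :
    s ^ α * t ^ β ≤ splitKernel α β ρ s + splitKernel β α ρ t := by
  rcases le_total s t with h | h
  · exact le_add_of_le_of_nonneg (rpow_mul_rpow_le_splitKernel hρ hs h (by linarith) hβ)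
      (splitKernel_nonneg hρ.le ht)
  · rw [mul_comm]
    exact le_add_of_nonneg_of_le (splitKernel_nonneg hρ.le hs)
      (rpow_mul_rpow_le_splitKernel hρ ht h (by linarith) hα)

variable {E : Type*} [NormedAddCommGroup E] [NormedSpace ℝ E] [FiniteDimensional ℝ E]
  [MeasurableSpace E] [BorelSpace E] (μ : Measure E) [μ.IsAddHaarMeasure]

theorem MeasureTheory.Measure.lintegral_comp_smul {r : ℝ} (hr : r ≠ 0) (f : E → ℝ≥0∞) :
    ∫⁻ x, f (r • x) ∂μ = ENNReal.ofReal |(r ^ finrank ℝ E)⁻¹| * ∫⁻ x, f x ∂μ := by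
  calc ∫⁻ x, f (r • x) ∂μ = ∫⁻ x, f x ∂(Measure.map (r • ·) μ) := (lintegral_map_equiv f
        (Homeomorph.smul (isUnit_iff_ne_zero.2 hr).unit).toMeasurableEquiv).symm
    _ = _ := by rw [Measure.map_addHaar_smul μ hr, lintegral_smul_measure, smul_eq_mul]

theorem lintegral_ball_norm_rpow_lt_top (hd : 1 ≤ finrank ℝ E)
    (hα : -(finrank ℝ E : ℝ) < α) :
    ∫⁻ x in ball 0 1, ENNReal.ofReal (‖x‖ ^ α) ∂μ < ∞ := by
  refine IntegrableOn.setLIntegral_lt_top (integrableOn_ball_of_norm_le_rpow (C := 1) hd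
    (by linarith : -α < finrank ℝ E) (ae_of_all _ fun x => ?_)
    (measurable_norm.pow_const α).aestronglyMeasurable)
  rw [neg_neg, one_mul, Real.norm_of_nonneg (by positivity)]

theorem lintegral_compl_ball_norm_rpow_lt_top (hγ : γ < -(finrank ℝ E : ℝ)) :
    ∫⁻ x in (ball 0 1)ᶜ, ENNReal.ofReal (‖x‖ ^ γ) ∂μ < ∞ := by
  have hγ0 : γ < 0 := hγ.trans_le (by simp)
  calc ∫⁻ x in (ball 0 1)ᶜ, ENNReal.ofReal (‖x‖ ^ γ) ∂μ
      ≤ ∫⁻ x, ENNReal.ofReal (2 ^ (-γ)) * ENNReal.ofReal ((1 + ‖x‖) ^ (-(-γ))) ∂μ := by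
        refine (setLIntegral_mono' measurableSet_ball.compl fun x hx => ?_).trans
          (setLIntegral_le_lintegral _ _)
        have hx1 : 1 ≤ ‖x‖ := by simpa using hx
        rw [← ENNReal.ofReal_mul (by positivity), neg_neg]
        refine ENNReal.ofReal_le_ofReal ?_
        calc ‖x‖ ^ γ = 2 ^ (-γ) * (2 * ‖x‖) ^ γ := by
              rw [Real.mul_rpow zero_le_two (norm_nonneg _), ← mul_assoc,
                ← Real.rpow_add zero_lt_two, neg_add_cancel, Real.rpow_zero, one_mul]
          _ ≤ 2 ^ (-γ) * (1 + ‖x‖) ^ γ := by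
              refine mul_le_mul_of_nonneg_left ?_ (by positivity)
              exact Real.rpow_le_rpow_of_nonpos (by linarith) (by linarith) hγ0.le
    _ < ∞ := by
        rw [lintegral_const_mul' _ _ ENNReal.ofReal_ne_top]
        exact ENNReal.mul_lt_top ENNReal.ofReal_lt_top (finite_integral_one_add_norm (by linarith))

theorem lintegral_splitKernel (hρ : 0 < ρ) :
    ∫⁻ x, ENNReal.ofReal (splitKernel α β ρ ‖x‖) ∂μ =
      ENNReal.ofReal (ρ ^ (α + β + finrank ℝ E)) *
        ∫⁻ x, ENNReal.ofReal (splitKernel α β 1 ‖x‖) ∂μ := by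
  calc ∫⁻ x, ENNReal.ofReal (splitKernel α β ρ ‖x‖) ∂μ
      = ∫⁻ x, ENNReal.ofReal (ρ ^ (α + β)) *
          ENNReal.ofReal (splitKernel α β 1 ‖ρ⁻¹ • x‖) ∂μ := by
        refine lintegral_congr fun x => ?_
        rw [← ENNReal.ofReal_mul (by positivity), ← splitKernel_mul_left hρ (norm_nonneg _),
          norm_smul, Real.norm_of_nonneg (inv_nonneg.2 hρ.le), mul_inv_cancel_left₀ hρ.ne']
    _ = ENNReal.ofReal (ρ ^ (α + β)) * (ENNReal.ofReal |((ρ⁻¹) ^ finrank ℝ E)⁻¹| *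
          ∫⁻ x, ENNReal.ofReal (splitKernel α β 1 ‖x‖) ∂μ) := by
        rw [lintegral_const_mul' _ _ ENNReal.ofReal_ne_top,
          Measure.lintegral_comp_smul μ (inv_ne_zero hρ.ne')
            (fun y => ENNReal.ofReal (splitKernel α β 1 ‖y‖))]
    _ = _ := by
        rw [← mul_assoc, ← ENNReal.ofReal_mul (by positivity), inv_pow, inv_inv,
          abs_of_pos (by positivity), ← Real.rpow_natCast, ← Real.rpow_add hρ]

theorem lintegral_splitKernel_one_lt_top (hd : 1 ≤ finrank ℝ E) (hα : -(finrank ℝ E : ℝ) < α)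
    (hαβ : α + β + finrank ℝ E < 0) :
    ∫⁻ x, ENNReal.ofReal (splitKernel α β 1 ‖x‖) ∂μ < ∞ := by
  rw [← lintegral_add_compl _ (measurableSet_ball (x := (0 : E)) (ε := 1)),
    setLIntegral_congr_fun measurableSet_ball (g := fun x => ENNReal.ofReal (‖x‖ ^ α))
      fun x hx => by simp [splitKernel, mem_ball_zero_iff.1 hx],
    setLIntegral_congr_fun measurableSet_ball.compl
      (g := fun x => ENNReal.ofReal (‖x‖ ^ (α + β)))
      fun x hx => by simp [splitKernel, not_lt.2 (by simpa using hx : 1 ≤ ‖x‖)]]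
  exact ENNReal.add_lt_top.2 ⟨lintegral_ball_norm_rpow_lt_top μ hd hα,
    lintegral_compl_ball_norm_rpow_lt_top μ (by linarith)⟩

theorem exists_lintegral_norm_sub_rpow_mul_le (hα : -(finrank ℝ E : ℝ) < α)
    (hβ : -(finrank ℝ E : ℝ) < β) (hαβ : α + β + finrank ℝ E < 0) :
    ∃ C : ℝ≥0∞, C ≠ ∞ ∧ ∀ u v : E, u ≠ v →
      ∫⁻ z, ENNReal.ofReal (‖u - z‖ ^ α * ‖z - v‖ ^ β) ∂μ ≤
        C * ENNReal.ofReal (‖u - v‖ ^ (α + β + finrank ℝ E)) := by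
  have hd : 1 ≤ finrank ℝ E := by
    have : (0 : ℝ) < finrank ℝ E := by linarith
    exact_mod_cast this
  set I : ℝ → ℝ → ℝ≥0∞ := fun p q => ∫⁻ x, ENNReal.ofReal (splitKernel p q 1 ‖x‖) ∂μ
  have hI : I α β + I β α ≠ ∞ := ENNReal.add_ne_top.2
    ⟨(lintegral_splitKernel_one_lt_top μ hd hα hαβ).ne,
      (lintegral_splitKernel_one_lt_top μ hd hβ (by linarith)).ne⟩
  refine ⟨ENNReal.ofReal (2 ^ (-(α + β + finrank ℝ E))) * (I α β + I β α),
    ENNReal.mul_ne_top ENNReal.ofReal_ne_top hI, fun u v huv => ?_⟩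
  set ρ := ‖u - v‖ / 2 with hρ_def
  have hρ : 0 < ρ := by have := norm_pos_iff.2 (sub_ne_zero.2 huv); positivity
  have hpt : ∀ z, ENNReal.ofReal (‖u - z‖ ^ α * ‖z - v‖ ^ β) ≤
      ENNReal.ofReal (splitKernel α β ρ ‖z - u‖) + ENNReal.ofReal (splitKernel β α ρ ‖z - v‖) := by
    intro z
    rw [← ENNReal.ofReal_add (splitKernel_nonneg hρ.le (norm_nonneg _))
      (splitKernel_nonneg hρ.le (norm_nonneg _)), norm_sub_rev u z]
    refine ENNReal.ofReal_le_ofReal (rpow_mul_rpow_le_splitKernel_add hρ (norm_nonneg _)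
      (norm_nonneg _) ?_ (by linarith) (by linarith))
    have := norm_sub_le_norm_sub_add_norm_sub u z v
    rw [norm_sub_rev u z] at this
    linarith [hρ_def]
  calc ∫⁻ z, ENNReal.ofReal (‖u - z‖ ^ α * ‖z - v‖ ^ β) ∂μ
      ≤ ∫⁻ z, (ENNReal.ofReal (splitKernel α β ρ ‖z - u‖) +
          ENNReal.ofReal (splitKernel β α ρ ‖z - v‖)) ∂μ := lintegral_mono hpt
    _ = ∫⁻ z, ENNReal.ofReal (splitKernel α β ρ ‖z‖) ∂μ +
          ∫⁻ z, ENNReal.ofReal (splitKernel β α ρ ‖z‖) ∂μ := by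
        rw [lintegral_add_left (by fun_prop),
          lintegral_sub_right_eq_self (fun z => ENNReal.ofReal (splitKernel α β ρ ‖z‖)) u,
          lintegral_sub_right_eq_self (fun z => ENNReal.ofReal (splitKernel β α ρ ‖z‖)) v]
    _ = ENNReal.ofReal (ρ ^ (α + β + finrank ℝ E)) * (I α β + I β α) := by
        rw [lintegral_splitKernel μ hρ, lintegral_splitKernel μ hρ, mul_add, add_comm β α]
    _ = _ := by
        rw [Real.div_rpow (norm_nonneg _) zero_le_two, div_eq_mul_inv, ← Real.rpow_neg zero_le_two,
          ENNReal.ofReal_mul (by positivity)]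
        ring

theorem exists_lintegral_lintegral_norm_sub_rpow_mul_le
    (hα : -(finrank ℝ E : ℝ) < α) (hβ : -(finrank ℝ E : ℝ) < β) (hγ : -(finrank ℝ E : ℝ) < γ)
    (hsum : α + β + γ + 2 * finrank ℝ E < 0) :
    ∃ C : ℝ≥0∞, C ≠ ∞ ∧ ∀ x y : E, x ≠ y →
      ∫⁻ w, ∫⁻ z, ENNReal.ofReal (‖y - z‖ ^ α * ‖z - w‖ ^ β * ‖w - x‖ ^ γ) ∂μ ∂μ ≤
        C * ENNReal.ofReal (‖x - y‖ ^ (α + β + γ + 2 * finrank ℝ E)) := by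
  have : Nontrivial E := Module.nontrivial_of_finrank_pos (R := ℝ) (by
    have : (0 : ℝ) < finrank ℝ E := by linarith
    exact_mod_cast this)
  obtain ⟨C₁, hC₁, h₁⟩ := exists_lintegral_norm_sub_rpow_mul_le μ hα hβ (by linarith)
  obtain ⟨C₂, hC₂, h₂⟩ := exists_lintegral_norm_sub_rpow_mul_le μ
    (α := α + β + finrank ℝ E) (by linarith) hγ (by linarith)
  refine ⟨C₁ * C₂, ENNReal.mul_ne_top hC₁ hC₂, fun x y hxy => ?_⟩
  have hinner : ∀ w ≠ y, ∫⁻ z, ENNReal.ofReal (‖y - z‖ ^ α * ‖z - w‖ ^ β * ‖w - x‖ ^ γ) ∂μ ≤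
      C₁ * ENNReal.ofReal (‖y - w‖ ^ (α + β + finrank ℝ E) * ‖w - x‖ ^ γ) := by
    intro w hw
    simp_rw [ENNReal.ofReal_mul' (Real.rpow_nonneg (norm_nonneg (w - x)) γ)]
    rw [lintegral_mul_const' _ _ ENNReal.ofReal_ne_top, ← mul_assoc]
    exact mul_le_mul_left (h₁ y w hw.symm) _
  calc ∫⁻ w, ∫⁻ z, ENNReal.ofReal (‖y - z‖ ^ α * ‖z - w‖ ^ β * ‖w - x‖ ^ γ) ∂μ ∂μ
      ≤ ∫⁻ w, C₁ * ENNReal.ofReal (‖y - w‖ ^ (α + β + finrank ℝ E) * ‖w - x‖ ^ γ) ∂μ :=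
        lintegral_mono_ae ((μ.ae_ne y).mono hinner)
    _ ≤ C₁ * (C₂ * ENNReal.ofReal (‖y - x‖ ^ (α + β + finrank ℝ E + γ + finrank ℝ E))) := by
        rw [lintegral_const_mul' _ _ hC₁]
        gcongr
        exact h₂ y x hxy.symm
    _ = _ := by
        rw [← mul_assoc, norm_sub_rev y x]
        ring_nf

end

theorem double_riesz_integral_neg (d : ℕ) (a b ϱ : ℝ)
    (ha : 0 < a) (hb : 0 < b) (hϱ : -(d : ℝ) < ϱ) (hsum : a + ϱ + b < 0) :
    ∃ C : ℝ, 0 < C ∧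
      ∀ D : Set (EuclideanSpace ℝ (Fin d)), D.Nonempty → IsOpen D →
        Bornology.IsBounded D →
        ∀ x ∈ D, ∀ y ∈ D, x ≠ y →
          (∫⁻ w in D, ∫⁻ z in D,
              ENNReal.ofReal (‖y - z‖ ^ (a - (d : ℝ)) * ‖z - w‖ ^ ϱ *
                ‖w - x‖ ^ (b - (d : ℝ)))) ≤
            ENNReal.ofReal (C * ‖x - y‖ ^ (a + ϱ + b)) := by
  have h := exists_lintegral_lintegral_norm_sub_rpow_mul_le
    (volume : Measure (EuclideanSpace ℝ (Fin d))) (α := a - d) (β := ϱ) (γ := b - d)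
  simp only [finrank_euclideanSpace_fin] at h
  obtain ⟨C, hC, hbound⟩ := h (by linarith) hϱ (by linarith) (by linarith)
  refine ⟨C.toReal + 1, by positivity, fun D _ _ _ x _ y _ hxy => ?_⟩
  calc ∫⁻ w in D, ∫⁻ z in D,
        ENNReal.ofReal (‖y - z‖ ^ (a - d) * ‖z - w‖ ^ ϱ * ‖w - x‖ ^ (b - d))
      ≤ ∫⁻ w, ∫⁻ z, ENNReal.ofReal (‖y - z‖ ^ (a - d) * ‖z - w‖ ^ ϱ * ‖w - x‖ ^ (b - d)) :=
        lintegral_mono' Measure.restrict_le_self fun _ =>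
          lintegral_mono' Measure.restrict_le_self le_rfl
    _ ≤ C * ENNReal.ofReal (‖x - y‖ ^ (a + ϱ + b)) := by
        convert hbound x y hxy using 4
        ring
    _ ≤ ENNReal.ofReal (C.toReal + 1) * ENNReal.ofReal (‖x - y‖ ^ (a + ϱ + b)) := by
        gcongr
        exact (ENNReal.le_ofReal_iff_toReal_le hC (by positivity)).2 (by linarith)
    _ = ENNReal.ofReal ((C.toReal + 1) * ‖x - y‖ ^ (a + ϱ + b)) :=
        (ENNReal.ofReal_mul (by positivity)).symm
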